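/- arXiv:2603.06187 — 6 statements merged into one kernel-verified Lean document; each statement's English description precedes it below -/
import Mathlib

section
/- Let M be a real symmetric n×n matrix. For every initial condition x₀ ∈ S^{n-1}, the solution x(t) := e^{tM} x₀ / ‖e^{tM} x₀‖ of the spherical gradient flow exists for all t ≥ 0 and converges: there exists x_∞ ∈ S^{n-1} such that x(t) → x_∞ as t → ∞. -/
/-!
Expand `x₀ = ∑ cᵢ bᵢ` in an orthonormal eigenbasis of `M`, so that `e^{tM} x₀ = ∑ e^{t μᵢ} cᵢ bᵢ`.
Let `m` be the largest eigenvalue `μᵢ` with `cᵢ ≠ 0`. After rescaling by `e^{-tm}`, every mode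
with `μᵢ < m` decays and the sum converges to the component `w ≠ 0` of `x₀` in the `m`-eigenspace.
Normalization ignores positive factors and is continuous away from `0`, so `x t → w / ‖w‖`.
-/

open Matrix Filter

/-- Reinterpret a vector `Fin n → ℝ` as an element of Euclidean space
(the identity map; `EuclideanSpace ℝ (Fin n)` is definitionally `Fin n → ℝ`). -/
def toE {n : ℕ} (v : Fin n → ℝ) : EuclideanSpace ℝ (Fin n) := WithLp.toLp 2 v

open Topology

theorem tendsto_exp_mul_sub_smul_atTop {E : Type*} [NormedAddCommGroup E] [NormedSpace ℝ E]
    {a m : ℝ} (v : E) (ha : a ≤ m) :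
    Tendsto (fun t => Real.exp (t * (a - m)) • v) atTop (𝓝 (if a = m then v else 0)) := by
  rcases ha.eq_or_lt with rfl | hlt
  · simp
  · have hexp : Tendsto (fun t => Real.exp (t * (a - m))) atTop (𝓝 0) :=
      Real.tendsto_exp_atBot.comp (tendsto_id.atTop_mul_const_of_neg (sub_neg.2 hlt))
    simpa [hlt.ne] using hexp.smul_const v

theorem tendsto_exp_neg_mul_smul_sum_exp_mul_smul {ι E : Type*} [Fintype ι]
    [NormedAddCommGroup E] [NormedSpace ℝ E] (a : ι → ℝ) (v : ι → E) {m : ℝ}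
    (hm : ∀ i, v i ≠ 0 → a i ≤ m) :
    Tendsto (fun t => Real.exp (-(t * m)) • ∑ i, Real.exp (t * a i) • v i) atTop
      (𝓝 (∑ i, if a i = m then v i else 0)) := by
  have hrescale (t : ℝ) : Real.exp (-(t * m)) • ∑ i, Real.exp (t * a i) • v i =
      ∑ i, Real.exp (t * (a i - m)) • v i := by
    simp only [Finset.smul_sum, smul_smul, ← Real.exp_add]
    ring_nf
  simp only [hrescale]
  refine tendsto_finsetSum _ fun i _ => ?_
  by_cases hv : v i = 0
  · simp [hv]
  · exact tendsto_exp_mul_sub_smul_atTop (v i) (hm i hv)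

theorem inv_norm_smul_smul_of_pos {E : Type*} [NormedAddCommGroup E] [NormedSpace ℝ E]
    {r : ℝ} (hr : 0 < r) (u : E) : ‖r • u‖⁻¹ • (r • u) = ‖u‖⁻¹ • u := by
  rw [norm_smul, Real.norm_of_nonneg hr.le, smul_smul, mul_inv, mul_right_comm,
    inv_mul_cancel₀ hr.ne', one_mul]

theorem Matrix.exp_mulVec_of_mulVec_eq_smul {ι : Type*} [Fintype ι] [DecidableEq ι]
    {A : Matrix ι ι ℝ} {v : ι → ℝ} {a : ℝ} (h : A *ᵥ v = a • v) :
    NormedSpace.exp A *ᵥ v = Real.exp a • v := by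
  let : NormedRing (Matrix ι ι ℝ) := Matrix.linftyOpNormedRing
  let : NormedAlgebra ℝ (Matrix ι ι ℝ) := Matrix.linftyOpNormedAlgebra
  have hpow (k : ℕ) : A ^ k *ᵥ v = a ^ k • v := by
    induction k with
    | zero => simp
    | succ k ih => rw [pow_succ', ← mulVec_mulVec, ih, mulVec_smul, h, smul_smul, ← pow_succ]
  have hA := (NormedSpace.exp_series_hasSum_exp' (𝕂 := ℝ) A).map (mulVec.addMonoidHomLeft v)
    (continuous_id.matrix_mulVec continuous_const)
  have ha := (NormedSpace.exp_series_hasSum_exp' (𝕂 := ℝ) a).smul_const v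
  rw [← Real.exp_eq_exp_ℝ] at ha
  refine hA.unique (ha.congr_fun fun k => ?_)
  simp [mulVec.addMonoidHomLeft, smul_mulVec, hpow, smul_smul]

theorem Matrix.IsHermitian.exp_smul_mulVec_eq_sum {ι : Type*} [Fintype ι] [DecidableEq ι]
    {M : Matrix ι ι ℝ} (hM : M.IsHermitian) (t : ℝ) (x : EuclideanSpace ℝ ι) :
    WithLp.toLp 2 (NormedSpace.exp (t • M) *ᵥ x.ofLp) =
      ∑ i, Real.exp (t * hM.eigenvalues i) •
        (hM.eigenvectorBasis.repr x i • hM.eigenvectorBasis i) := by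
  have heig (i : ι) : NormedSpace.exp (t • M) *ᵥ (hM.eigenvectorBasis i).ofLp =
      Real.exp (t * hM.eigenvalues i) • (hM.eigenvectorBasis i).ofLp := by
    refine exp_mulVec_of_mulVec_eq_smul ?_
    rw [smul_mulVec, hM.mulVec_eigenvectorBasis, smul_smul]
  conv_lhs => rw [← hM.eigenvectorBasis.sum_repr x]
  simp [mulVec_sum, mulVec_smul, heig, smul_comm (Real.exp _)]

theorem Matrix.IsHermitian.exists_tendsto_exp_neg_mul_smul_exp_smul_mulVec {ι : Type*}
    [Fintype ι] [DecidableEq ι] {M : Matrix ι ι ℝ} (hM : M.IsHermitian)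
    {x : EuclideanSpace ℝ ι} (hx : x ≠ 0) :
    ∃ m : ℝ, ∃ w : EuclideanSpace ℝ ι, w ≠ 0 ∧
      Tendsto (fun t => Real.exp (-(t * m)) • WithLp.toLp 2 (NormedSpace.exp (t • M) *ᵥ x.ofLp))
        atTop (𝓝 w) := by
  set b := hM.eigenvectorBasis
  set μ := hM.eigenvalues
  set c := b.repr x
  obtain ⟨j, hj⟩ : ∃ j, c j ≠ 0 := by
    by_contra! h
    exact hx (b.repr.map_eq_zero_iff.1 (PiLp.ext h))
  obtain ⟨i₀, hi₀, hmax⟩ := Finset.exists_max_image {i | c i ≠ 0} μ ⟨j, by simpa using hj⟩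
  have hci₀ : c i₀ ≠ 0 := by simpa using hi₀
  refine ⟨μ i₀, ∑ i, if μ i = μ i₀ then c i • b i else 0, ?_, ?_⟩
  · intro hw
    have hcoord := congrArg (inner ℝ (b i₀)) hw
    simp only [← ite_zero_smul, b.orthonormal.inner_right_fintype, inner_zero_right] at hcoord
    simp [hci₀] at hcoord
  · simp only [hM.exp_smul_mulVec_eq_sum]
    refine tendsto_exp_neg_mul_smul_sum_exp_mul_smul _ _ fun i hi => hmax i ?_
    simpa using left_ne_zero_of_smul hi

theorem stmt2_general {n : ℕ} (M : Matrix (Fin n) (Fin n) ℝ) (hM : M.IsSymm)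
    (x₀ : EuclideanSpace ℝ (Fin n)) (hx₀ : ‖x₀‖ = 1)
    (x : ℝ → EuclideanSpace ℝ (Fin n))
    (hxdef : ∀ t : ℝ, x t =
      (‖toE ((NormedSpace.exp (t • M)).mulVec (WithLp.ofLp x₀))‖)⁻¹ •
        toE ((NormedSpace.exp (t • M)).mulVec (WithLp.ofLp x₀))) :
    ∃ xinf : EuclideanSpace ℝ (Fin n), ‖xinf‖ = 1 ∧
      Tendsto x atTop (nhds xinf) := by
  have hx₀ne : x₀ ≠ 0 := by rintro rfl; simp at hx₀
  obtain ⟨m, w, hw, hlim⟩ :=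
    (isHermitian_iff_isSymm.2 hM).exists_tendsto_exp_neg_mul_smul_exp_smul_mulVec hx₀ne
  have hx : x = fun t => ‖Real.exp (-(t * m)) • toE (NormedSpace.exp (t • M) *ᵥ x₀.ofLp)‖⁻¹ •
      (Real.exp (-(t * m)) • toE (NormedSpace.exp (t • M) *ᵥ x₀.ofLp)) := by
    ext1 t
    rw [hxdef, inv_norm_smul_smul_of_pos (Real.exp_pos _)]
  refine ⟨‖w‖⁻¹ • w, norm_smul_inv_norm hw, ?_⟩
  rw [hx]
  exact (hlim.norm.inv₀ (norm_ne_zero_iff.2 hw)).smul hlim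

/-- **Convergence of the spherical gradient flow of a quadratic form.**
For a real symmetric matrix `M` and any unit initial condition `x₀`, the
solution `x t = e^{tM} x₀ / ‖e^{tM} x₀‖` of the spherical gradient flow
converges as `t → ∞` to some point `x_∞` of the unit sphere. -/
theorem stmt2 {n : ℕ} (hn : 2 ≤ n) (M : Matrix (Fin n) (Fin n) ℝ) (hM : M.IsSymm)
    (x₀ : EuclideanSpace ℝ (Fin n)) (hx₀ : ‖x₀‖ = 1)
    (x : ℝ → EuclideanSpace ℝ (Fin n))
    (hxdef : ∀ t : ℝ, x t =
      (‖toE ((NormedSpace.exp (t • M)).mulVec (WithLp.ofLp x₀))‖)⁻¹ •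
        toE ((NormedSpace.exp (t • M)).mulVec (WithLp.ofLp x₀))) :
    ∃ xinf : EuclideanSpace ℝ (Fin n), ‖xinf‖ = 1 ∧
      Tendsto x atTop (nhds xinf) :=
  stmt2_general M hM x₀ hx₀ x hxdef
end

section
/- Let M be a real symmetric n×n matrix whose largest eigenvalue λ₁ is simple, and let x* ∈ S^{n-1} be a unit eigenvector for λ₁. Then for surface-measure-almost every initial condition x₀ ∈ S^{n-1}, the solution x(t) := e^{tM} x₀ / ‖e^{tM} x₀‖ of the spherical gradient flow satisfies min( ‖x(t) − x*‖ , ‖x(t) + x*‖ ) → 0 as t → ∞; i.e., almost every trajectory converges to either x* or −x*. -/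
/-!
In an orthonormal eigenbasis of `M`, `e^{-tλ₁} e^{tM} x₀` converges to the orthogonal projection
of `x₀` onto the top eigenspace, which by simplicity is `⟪x⋆, x₀⟫ x⋆`. Normalising, the flow
converges to `sign ⟪x⋆, x₀⟫ • x⋆` whenever `⟪x⋆, x₀⟫ ≠ 0`. The exceptional initial conditions
therefore lie in the great sphere `S^{n-1} ∩ x⋆ᗮ`, a sphere in the hyperplane `x⋆ᗮ`; since
`μH[n-1]` restricted to that hyperplane is an additive Haar measure, spheres in it are null.
-/

open Matrix MeasureTheory Filter

open scoped RealInnerProductSpace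
open Metric Module NormedSpace Module.End

theorem exp_apply_of_apply_eq_smul {E : Type*} [NormedAddCommGroup E] [NormedSpace ℝ E]
    [CompleteSpace E] {T : E →L[ℝ] E} {v : E} {μ : ℝ} (h : T v = μ • v) :
    exp T v = Real.exp μ • v := by
  have hpow (k : ℕ) : (T ^ k) v = μ ^ k • v := by
    induction k with
    | zero => simp
    | succ k ih => simp [pow_succ, ih, h, smul_smul, mul_comm]
  have hT := (exp_series_hasSum_exp' (𝕂 := ℝ) T).mapL (ContinuousLinearMap.apply ℝ E v)
  have hμ := (exp_series_hasSum_exp' (𝕂 := ℝ) μ).smul_const v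
  rw [Real.exp_eq_exp_ℝ]
  refine hT.unique ?_
  simpa [hpow, smul_smul] using hμ

theorem Matrix.toEuclideanCLM_exp {ι : Type*} [Fintype ι] [DecidableEq ι] (A : Matrix ι ι ℝ) :
    toEuclideanCLM (𝕜 := ℝ) (exp A) = exp (toEuclideanCLM (𝕜 := ℝ) A) := by
  -- `exp` only depends on the topology, so any compatible normed algebra structure will do.
  let := Matrix.linftyOpNormedRing (n := ι) (α := ℝ)
  let := Matrix.linftyOpNormedAlgebra (n := ι) (R := ℝ) (α := ℝ)
  let : NormedAlgebra ℚ (Matrix ι ι ℝ) := NormedAlgebra.restrictScalars ℚ ℝ _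
  exact map_exp (toEuclideanCLM (𝕜 := ℝ) (n := ι))
    (toEuclideanCLM (𝕜 := ℝ) (n := ι)).toAlgEquiv.toLinearMap.continuous_of_finiteDimensional A

theorem toE_exp_mulVec {n : ℕ} (A : Matrix (Fin n) (Fin n) ℝ) (x : EuclideanSpace ℝ (Fin n)) :
    toE (exp A *ᵥ x) = exp (toEuclideanCLM (𝕜 := ℝ) A) x := by
  rw [← Matrix.toEuclideanCLM_exp]
  rfl

section HausdorffMeasure

variable {E : Type*} [NormedAddCommGroup E] [MeasurableSpace E] [BorelSpace E]

theorem hausdorffMeasure_sphere_inter_submodule_eq_zero [NormedSpace ℝ E] (K : Submodule ℝ E)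
    [FiniteDimensional ℝ K] [Nontrivial K] (r : ℝ) :
    μH[finrank ℝ K] (sphere (0 : E) r ∩ K) = 0 := by
  have himage : sphere (0 : E) r ∩ K = K.subtypeₗᵢ '' sphere 0 r := by
    ext x
    constructor
    · rintro ⟨hx, hxK⟩
      exact ⟨⟨x, hxK⟩, by simpa using hx, rfl⟩
    · rintro ⟨y, hy, rfl⟩
      exact ⟨by simpa using hy, y.2⟩
  rw [himage, K.subtypeₗᵢ.isometry.hausdorffMeasure_image (Or.inl (Nat.cast_nonneg _))]
  exact Measure.addHaar_sphere _ _ _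

theorem hausdorffMeasure_sphere_inter_orthogonal_singleton_eq_zero [InnerProductSpace ℝ E]
    [FiniteDimensional ℝ E] (hE : 2 ≤ finrank ℝ E) {v : E} (hv : v ≠ 0) (r : ℝ) :
    μH[(finrank ℝ E : ℝ) - 1] (sphere (0 : E) r ∩ (ℝ ∙ v)ᗮ) = 0 := by
  have hK : finrank ℝ (ℝ ∙ v)ᗮ = finrank ℝ E - 1 := by
    have hsum := (ℝ ∙ v).finrank_add_finrank_orthogonal
    rw [finrank_span_singleton hv] at hsum
    omega
  have : Nontrivial (ℝ ∙ v)ᗮ := Module.finrank_pos_iff (R := ℝ) |>.1 (by omega)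
  have hnull := hausdorffMeasure_sphere_inter_submodule_eq_zero (ℝ ∙ v)ᗮ r
  rwa [hK, Nat.cast_sub (by omega), Nat.cast_one] at hnull

end HausdorffMeasure

section SymmetricFlow

variable {E : Type*} [NormedAddCommGroup E] [InnerProductSpace ℝ E] [FiniteDimensional ℝ E]
  {T : E →L[ℝ] E} (hT : (T : E →ₗ[ℝ] E).IsSymmetric)

include hT

theorem LinearMap.IsSymmetric.exp_smul_apply_eq_sum (t : ℝ) (x : E) :
    exp (t • T) x = ∑ i, (Real.exp (t * hT.eigenvalues rfl i) *
      ⟪hT.eigenvectorBasis rfl i, x⟫) • hT.eigenvectorBasis rfl i := by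
  conv_lhs => rw [← (hT.eigenvectorBasis rfl).sum_repr' x]
  refine (map_sum _ _ _).trans (Finset.sum_congr rfl fun i _ => ?_)
  have hi : (t • T) (hT.eigenvectorBasis rfl i) =
      (t * hT.eigenvalues rfl i) • hT.eigenvectorBasis rfl i := by
    rw [FunLike.coe_smul, Pi.smul_apply, mul_smul]
    exact congrArg (t • ·) (mem_eigenspace_iff.1 (hT.hasEigenvector_eigenvectorBasis rfl i).1)
  rw [map_smul, exp_apply_of_apply_eq_smul hi, smul_smul, mul_comm]

theorem LinearMap.IsSymmetric.starProjection_eigenspace_eq_sum (lam : ℝ) (x : E) :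
    (eigenspace (T : E →ₗ[ℝ] E) lam).starProjection x = ∑ i,
      (if hT.eigenvalues rfl i = lam then ⟪hT.eigenvectorBasis rfl i, x⟫ else 0) •
        hT.eigenvectorBasis rfl i := by
  set b := hT.eigenvectorBasis rfl
  have hb (i) := (hT.hasEigenvector_eigenvectorBasis rfl i).1
  refine Submodule.eq_starProjection_of_mem_of_inner_eq_zero
    (Submodule.sum_mem _ fun i _ => ?_) fun k hk => ?_
  · split_ifs with hi
    · exact Submodule.smul_mem _ _ (hi ▸ hb i)
    · simp
  · nth_rw 1 [← b.sum_repr' x]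
    rw [← Finset.sum_sub_distrib, sum_inner]
    refine Finset.sum_eq_zero fun i _ => ?_
    split_ifs with hi
    · simp
    · have hik : ⟪b i, k⟫ = 0 := hT.orthogonalFamily_eigenspaces hi ⟨b i, hb i⟩ ⟨k, hk⟩
      rw [zero_smul, sub_zero, real_inner_smul_left, hik, mul_zero]

theorem LinearMap.IsSymmetric.tendsto_exp_neg_mul_smul_exp_smul_apply {lam : ℝ}
    (hmax : ∀ μ, HasEigenvalue (T : E →ₗ[ℝ] E) μ → μ ≤ lam) (x : E) :
    Tendsto (fun t : ℝ => Real.exp (-(t * lam)) • exp (t • T) x) atTop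
      (nhds ((eigenspace (T : E →ₗ[ℝ] E) lam).starProjection x)) := by
  simp_rw [hT.starProjection_eigenspace_eq_sum, hT.exp_smul_apply_eq_sum, Finset.smul_sum,
    smul_smul]
  refine tendsto_finsetSum _ fun i _ => Tendsto.smul_const ?_ _
  have hcoeff (t : ℝ) : Real.exp (-(t * lam)) * (Real.exp (t * hT.eigenvalues rfl i) *
      ⟪hT.eigenvectorBasis rfl i, x⟫) =
      Real.exp (t * (hT.eigenvalues rfl i - lam)) * ⟪hT.eigenvectorBasis rfl i, x⟫ := by
    rw [← mul_assoc, ← Real.exp_add]; ring_nf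
  simp_rw [hcoeff]
  split_ifs with hi
  · simp [hi]
  · have hlt : hT.eigenvalues rfl i - lam < 0 :=
      sub_neg.2 ((hmax _ (hT.hasEigenvalue_eigenvalues rfl i)).lt_of_ne hi)
    simpa using (Real.tendsto_exp_atBot.comp
      (tendsto_id.atTop_mul_const_of_neg hlt)).mul_const ⟪hT.eigenvectorBasis rfl i, x⟫

theorem LinearMap.IsSymmetric.tendsto_normalize_exp_smul_apply {lam : ℝ}
    (hmax : ∀ μ, HasEigenvalue (T : E →ₗ[ℝ] E) μ → μ ≤ lam) {x : E}
    (hx : (eigenspace (T : E →ₗ[ℝ] E) lam).starProjection x ≠ 0) :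
    Tendsto (fun t : ℝ => NormedSpace.normalize (exp (t • T) x)) atTop
      (nhds (NormedSpace.normalize ((eigenspace (T : E →ₗ[ℝ] E) lam).starProjection x))) := by
  have hcont : ContinuousAt NormedSpace.normalize
      ((eigenspace (T : E →ₗ[ℝ] E) lam).starProjection x) :=
    (continuous_norm.continuousAt.inv₀ (norm_ne_zero_iff.2 hx)).smul continuousAt_id
  refine (hcont.tendsto.comp (hT.tendsto_exp_neg_mul_smul_exp_smul_apply hmax x)).congr fun t => ?_
  exact normalize_smul_of_pos (Real.exp_pos _) _

theorem LinearMap.IsSymmetric.tendsto_normalize_exp_smul_apply_of_eigenspace_eq_span {lam : ℝ}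
    (hmax : ∀ μ, HasEigenvalue (T : E →ₗ[ℝ] E) μ → μ ≤ lam) {v : E}
    (hspan : eigenspace (T : E →ₗ[ℝ] E) lam = ℝ ∙ v) (hv : ‖v‖ = 1) {x : E} (hx : ⟪v, x⟫ ≠ 0) :
    Tendsto (fun t : ℝ => NormedSpace.normalize (exp (t • T) x)) atTop
      (nhds ((SignType.sign ⟪v, x⟫ : ℝ) • v)) := by
  have hproj : (eigenspace (T : E →ₗ[ℝ] E) lam).starProjection x = ⟪v, x⟫ • v := by
    simp only [hspan, Submodule.starProjection_unit_singleton ℝ hv]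
  have hv0 : v ≠ 0 := norm_ne_zero_iff.1 (hv ▸ one_ne_zero)
  have hlim := hT.tendsto_normalize_exp_smul_apply hmax (x := x)
    (hproj ▸ smul_ne_zero hx hv0)
  rwa [hproj, normalize_smul, normalize_eq_self_of_norm_eq_one hv] at hlim

end SymmetricFlow

theorem tendsto_min_norm_sub_norm_add_of_tendsto_sign_smul {α E : Type*} [NormedAddCommGroup E]
    [NormedSpace ℝ E] {l : Filter α} {y : α → E} {v : E} {c : ℝ} (hc : c ≠ 0)
    (h : Tendsto y l (nhds ((SignType.sign c : ℝ) • v))) :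
    Tendsto (fun a => min ‖y a - v‖ ‖y a + v‖) l (nhds 0) := by
  have hcont : Continuous fun z : E => min ‖z - v‖ ‖z + v‖ := by fun_prop
  have hzero : min ‖(SignType.sign c : ℝ) • v - v‖ ‖(SignType.sign c : ℝ) • v + v‖ = 0 := by
    rcases hc.lt_or_gt with hc | hc <;> simp [hc]
  exact hzero ▸ (hcont.tendsto _).comp h

theorem stmt4_general {n : ℕ} (hn : 2 ≤ n) (M : Matrix (Fin n) (Fin n) ℝ) (hM : M.IsSymm)
    (lam1 : ℝ)
    (hmax : ∀ mu : ℝ, Module.End.HasEigenvalue (Matrix.toEuclideanLin M) mu → mu ≤ lam1)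
    (hsimple : Module.finrank ℝ
      (Module.End.eigenspace (Matrix.toEuclideanLin M) lam1) = 1)
    (xstar : EuclideanSpace ℝ (Fin n)) (hxstar : ‖xstar‖ = 1)
    (hxstarEig : Matrix.toEuclideanLin M xstar = lam1 • xstar) :
    μH[(n : ℝ) - 1] {x₀ : EuclideanSpace ℝ (Fin n) | ‖x₀‖ = 1 ∧
      ¬ Tendsto (fun t : ℝ =>
          min ‖(‖toE ((NormedSpace.exp (t • M)).mulVec x₀)‖)⁻¹ •
                  toE ((NormedSpace.exp (t • M)).mulVec x₀) - xstar‖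
              ‖(‖toE ((NormedSpace.exp (t • M)).mulVec x₀)‖)⁻¹ •
                  toE ((NormedSpace.exp (t • M)).mulVec x₀) + xstar‖)
        atTop (nhds 0)} = 0 := by
  set T := toEuclideanCLM (𝕜 := ℝ) M
  have hT : (T : EuclideanSpace ℝ (Fin n) →ₗ[ℝ] EuclideanSpace ℝ (Fin n)).IsSymmetric :=
    isSymmetric_toEuclideanLin_iff.2 (isHermitian_iff_isSymm.2 hM)
  have hxstar0 : xstar ≠ 0 := by rintro rfl; simp at hxstar
  have hspan : eigenspace (T : _ →ₗ[ℝ] _) lam1 = ℝ ∙ xstar :=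
    eq_span_singleton_of_mem_of_finrank_eq_one hsimple
      (mem_eigenspace_iff.2 hxstarEig) hxstar0
  have hnull := hausdorffMeasure_sphere_inter_orthogonal_singleton_eq_zero
    (by rwa [finrank_euclideanSpace_fin]) hxstar0 1
  rw [finrank_euclideanSpace_fin] at hnull
  refine measure_mono_null ?_ hnull
  rintro x₀ ⟨hx₀, hbad⟩
  refine ⟨mem_sphere_zero_iff_norm.2 hx₀, ?_⟩
  rw [SetLike.mem_coe, Submodule.mem_orthogonal_singleton_iff_inner_right]
  by_contra hc
  have hlim := hT.tendsto_normalize_exp_smul_apply_of_eigenspace_eq_span hmax hspan hxstar hc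
  refine hbad ((tendsto_min_norm_sub_norm_add_of_tendsto_sign_smul hc hlim).congr fun t => ?_)
  rw [toE_exp_mulVec, map_smul]
  rfl

/-- **Almost sure convergence to one of the two poles.**
Let `M` be a real symmetric matrix whose largest eigenvalue `lam1` is simple,
and let `x⋆` be a unit eigenvector for `lam1`.  Then, for all unit initial
conditions `x₀` outside a set which is null for the `(n-1)`-dimensional
Hausdorff (surface) measure on the sphere, the solution
`x t = e^{tM} x₀ / ‖e^{tM} x₀‖` of the spherical gradient flow satisfies
`min(‖x t - x⋆‖, ‖x t + x⋆‖) → 0` as `t → ∞`. -/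
theorem stmt4 {n : ℕ} (hn : 2 ≤ n) (M : Matrix (Fin n) (Fin n) ℝ) (hM : M.IsSymm)
    (lam1 : ℝ) (hlam1 : Module.End.HasEigenvalue (Matrix.toEuclideanLin M) lam1)
    (hmax : ∀ mu : ℝ, Module.End.HasEigenvalue (Matrix.toEuclideanLin M) mu → mu ≤ lam1)
    (hsimple : Module.finrank ℝ
      (Module.End.eigenspace (Matrix.toEuclideanLin M) lam1) = 1)
    (xstar : EuclideanSpace ℝ (Fin n)) (hxstar : ‖xstar‖ = 1)
    (hxstarEig : Matrix.toEuclideanLin M xstar = lam1 • xstar) :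
    μH[(n : ℝ) - 1] {x₀ : EuclideanSpace ℝ (Fin n) | ‖x₀‖ = 1 ∧
      ¬ Tendsto (fun t : ℝ =>
          min ‖(‖toE ((NormedSpace.exp (t • M)).mulVec x₀)‖)⁻¹ •
                  toE ((NormedSpace.exp (t • M)).mulVec x₀) - xstar‖
              ‖(‖toE ((NormedSpace.exp (t • M)).mulVec x₀)‖)⁻¹ •
                  toE ((NormedSpace.exp (t • M)).mulVec x₀) + xstar‖)
        atTop (nhds 0)} = 0 :=
  stmt4_general hn M hM lam1 hmax hsimple xstar hxstar hxstarEig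
end

section
/- Let n ≥ 2 and let f : ℝ^n → ℝ be twice continuously differentiable. Then for every x ∈ ℝ^n with ‖x‖ = 1, Σ_{i,j,k,l=1}^n ∂_i( V^i_{jk} · ∂_l( V^l_{jk} f ) )(x) = Σ_{i,j,l=1}^n ∂_i( V̂^i_j · ∂_l( V̂^l_j f ) )(x). That is, the 'diagonal' part L^d of the Fokker–Planck operator of the Random Quadratic Form coincides pointwise on the unit sphere with the Fokker–Planck operator L* of spherical Brownian motion. -/
/-- The partial derivative `∂_i g` of `g : ℝⁿ → ℝ` with respect to the `i`-th
Euclidean coordinate. -/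
noncomputable def pd {n : ℕ} (i : Fin n) (g : EuclideanSpace ℝ (Fin n) → ℝ)
    (x : EuclideanSpace ℝ (Fin n)) : ℝ :=
  fderiv ℝ g x (EuclideanSpace.single i (1 : ℝ))

/-- Diffusion coefficients `V^i_{jk}(x) = (δ_{ij} - x_i x_j) x_k` of the
Random Quadratic Form, in Euclidean coordinates. -/
def Vc {n : ℕ} (i j k : Fin n) (x : EuclideanSpace ℝ (Fin n)) : ℝ :=
  ((if i = j then (1 : ℝ) else 0) - x i * x j) * x k

/-- Diffusion coefficients `V̂^i_j(x) = δ_{ij} - x_i x_j` of spherical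
Brownian motion, in Euclidean coordinates. -/
def Vhat {n : ℕ} (i j : Fin n) (x : EuclideanSpace ℝ (Fin n)) : ℝ :=
  (if i = j then (1 : ℝ) else 0) - x i * x j

/-! Write `P(y) = I - y yᵀ` for the matrix `V̂(y)`, so that `V^i_{jk}(y) = P_{ij}(y) y_k`,
and `D_j = Σ_l ∂_l (P_{lj} f)`. Summing over `k` with the product rule, the field differentiated
by `∂_i` on the left is `P_{ij} (‖y‖² D_j + Σ_l y_l P_{lj} f)`, and
`Σ_l y_l P_{lj}(y) = (1 - ‖y‖²) y_j`. Hence it differs from the field `P_{ij} D_j` of the right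
side by `(‖y‖² - 1) P_{ij} (D_j - y_j f)`. On the unit sphere the factor `‖y‖² - 1` vanishes, so
`∂_i` of the difference is `2 x_i P_{ij}(x) (D_j(x) - x_j f(x))`, which sums to zero over `i`
because `xᵀ P(x) = (1 - ‖x‖²) xᵀ = 0`. -/

open Finset

section Lemmas

variable {n : ℕ}

section PartialDerivative

variable {g h : EuclideanSpace ℝ (Fin n) → ℝ} {x : EuclideanSpace ℝ (Fin n)}

lemma pd_add (i : Fin n) (hg : DifferentiableAt ℝ g x) (hh : DifferentiableAt ℝ h x) :
    pd i (fun y => g y + h y) x = pd i g x + pd i h x := by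
  simp [pd, fderiv_fun_add hg hh]

lemma pd_sub_const (i : Fin n) (c : ℝ) : pd i (fun y => g y - c) x = pd i g x := by
  simp [pd, fderiv_sub_const]

lemma pd_mul (i : Fin n) (hg : DifferentiableAt ℝ g x) (hh : DifferentiableAt ℝ h x) :
    pd i (fun y => g y * h y) x = pd i g x * h x + g x * pd i h x := by
  simp [pd, fderiv_fun_mul hg hh]
  ring

lemma pd_sum {ι : Type*} (s : Finset ι) (i : Fin n) {g : ι → EuclideanSpace ℝ (Fin n) → ℝ}
    (hg : ∀ k ∈ s, DifferentiableAt ℝ (g k) x) :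
    pd i (fun y => ∑ k ∈ s, g k y) x = ∑ k ∈ s, pd i (g k) x := by
  simp [pd, fderiv_fun_sum hg]

lemma pd_coord (i j : Fin n) :
    pd i (fun y : EuclideanSpace ℝ (Fin n) => y j) x = if i = j then 1 else 0 := by
  rw [pd, show (fun y : EuclideanSpace ℝ (Fin n) => y j) = EuclideanSpace.proj (𝕜 := ℝ) j
    from rfl, ContinuousLinearMap.fderiv]
  simp [eq_comm]

lemma pd_norm_sq (i : Fin n) :
    pd i (fun y : EuclideanSpace ℝ (Fin n) => ‖y‖ ^ 2) x = 2 * x i := by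
  simp [pd, fderiv_norm_sq_apply, EuclideanSpace.inner_single_right]

lemma differentiable_pd (i : Fin n) (hg : ContDiff ℝ 2 g) : Differentiable ℝ (pd i g) :=
  ((hg.fderiv_right (m := 1) le_rfl).clm_apply contDiff_const).differentiable one_ne_zero

end PartialDerivative

section Coefficients

lemma contDiff_Vhat {k : WithTop ℕ∞} (i j : Fin n) : ContDiff ℝ k (Vhat i j) := by
  unfold Vhat; fun_prop

lemma contDiff_Vc {k : WithTop ℕ∞} (i j l : Fin n) : ContDiff ℝ k (Vc i j l) := by
  unfold Vc; fun_prop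

lemma Vc_eq_Vhat_mul (i j k : Fin n) (y : EuclideanSpace ℝ (Fin n)) :
    Vc i j k y = Vhat i j y * y k := rfl

lemma sum_mul_Vhat (j : Fin n) (y : EuclideanSpace ℝ (Fin n)) :
    ∑ i, y i * Vhat i j y = (1 - ‖y‖ ^ 2) * y j := by
  rw [EuclideanSpace.real_norm_sq_eq, sub_mul, one_mul, sum_mul]
  simp only [Vhat, mul_sub, sum_sub_distrib, mul_ite, mul_one, mul_zero, sum_ite_eq', mem_univ,
    if_true]
  congr 1
  exact sum_congr rfl fun i _ => by ring

end Coefficients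

section Operators

variable {g : EuclideanSpace ℝ (Fin n) → ℝ}

noncomputable def divVhatMul (g : EuclideanSpace ℝ (Fin n) → ℝ) (j : Fin n)
    (y : EuclideanSpace ℝ (Fin n)) : ℝ :=
  ∑ l, pd l (fun z => Vhat l j z * g z) y

lemma differentiable_divVhatMul (hg : ContDiff ℝ 2 g) (j : Fin n) :
    Differentiable ℝ (divVhatMul g j) :=
  Differentiable.fun_sum fun l _ => differentiable_pd l ((contDiff_Vhat l j).mul hg)

lemma differentiable_mul_pd_mul {a b : EuclideanSpace ℝ (Fin n) → ℝ} (ha : ContDiff ℝ 1 a)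
    (hb : ContDiff ℝ 2 b) (hg : ContDiff ℝ 2 g) (l : Fin n) :
    Differentiable ℝ (fun y => a y * pd l (fun z => b z * g z) y) :=
  (ha.differentiable one_ne_zero).fun_mul (differentiable_pd l (hb.mul hg))

lemma pd_Vc_mul {y : EuclideanSpace ℝ (Fin n)} (hg : DifferentiableAt ℝ g y) (j k l : Fin n) :
    pd l (fun z => Vc l j k z * g z) y
      = pd l (fun z => Vhat l j z * g z) y * y k
        + Vhat l j y * g y * (if l = k then 1 else 0) := by
  simp_rw [Vc_eq_Vhat_mul, mul_right_comm _ _ (g _)]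
  rw [pd_mul l (((contDiff_Vhat l j).differentiable one_ne_zero y).fun_mul hg)
    (by fun_prop), pd_coord]

lemma sum_Vc_mul_pd_Vc_mul (hg : Differentiable ℝ g) (i j : Fin n)
    (y : EuclideanSpace ℝ (Fin n)) :
    ∑ k, ∑ l, Vc i j k y * pd l (fun z => Vc l j k z * g z) y
      = Vhat i j y * (‖y‖ ^ 2 * divVhatMul g j y + (1 - ‖y‖ ^ 2) * (y j * g y)) := by
  have hinner : ∀ l, ∑ k, Vc i j k y * pd l (fun z => Vc l j k z * g z) y
      = Vhat i j y * (‖y‖ ^ 2 * pd l (fun z => Vhat l j z * g z) y + y l * Vhat l j y * g y) := by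
    intro l
    simp only [pd_Vc_mul (hg y)]
    simp only [Vc_eq_Vhat_mul, EuclideanSpace.real_norm_sq_eq, mul_add,
      sum_add_distrib, mul_ite, mul_one, mul_zero, sum_ite_eq, mem_univ, if_true, sum_mul, mul_sum]
    congr 1
    · exact sum_congr rfl fun k _ => by ring
    · ring
  rw [sum_comm, sum_congr rfl fun l _ => hinner l, ← mul_sum, sum_add_distrib, ← mul_sum,
    ← sum_mul, sum_mul_Vhat, divVhatMul]
  ring

lemma pd_sum_sum_Vc_mul_pd_Vc_mul (hg : ContDiff ℝ 2 g) (i j : Fin n)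
    (x : EuclideanSpace ℝ (Fin n)) :
    ∑ k, ∑ l, pd i (fun y => Vc i j k y * pd l (fun z => Vc l j k z * g z) y) x
      = pd i (fun y =>
          Vhat i j y * (‖y‖ ^ 2 * divVhatMul g j y + (1 - ‖y‖ ^ 2) * (y j * g y))) x := by
  have hterm (k l : Fin n) := differentiable_mul_pd_mul (contDiff_Vc i j k) (contDiff_Vc l j k) hg l
  rw [← funext (sum_Vc_mul_pd_Vc_mul (hg.differentiable two_ne_zero) i j),
    pd_sum _ _ fun k _ => (Differentiable.fun_sum fun l _ => hterm k l) x]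
  exact sum_congr rfl fun k _ => (pd_sum _ _ fun l _ => hterm k l x).symm

lemma sum_pd_Vhat_mul_pd_Vhat_mul (hg : ContDiff ℝ 2 g) (i j : Fin n)
    (x : EuclideanSpace ℝ (Fin n)) :
    ∑ l, pd i (fun y => Vhat i j y * pd l (fun z => Vhat l j z * g z) y) x
      = pd i (fun y => Vhat i j y * divVhatMul g j y) x := by
  simp only [divVhatMul, mul_sum]
  exact (pd_sum _ _ fun l _ =>
    differentiable_mul_pd_mul (contDiff_Vhat i j) (contDiff_Vhat l j) hg l x).symm

end Operators

lemma pd_Vhat_mul_of_norm_eq_one {D G : EuclideanSpace ℝ (Fin n) → ℝ}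
    {x : EuclideanSpace ℝ (Fin n)} (hx : ‖x‖ = 1) (hD : DifferentiableAt ℝ D x)
    (hG : DifferentiableAt ℝ G x) (i j : Fin n) :
    pd i (fun y => Vhat i j y * (‖y‖ ^ 2 * D y + (1 - ‖y‖ ^ 2) * G y)) x
      = pd i (fun y => Vhat i j y * D y) x + 2 * (x i * (Vhat i j x * (D x - G x))) := by
  have hV : DifferentiableAt ℝ (Vhat i j) x := (contDiff_Vhat i j).differentiable one_ne_zero x
  have hN : DifferentiableAt ℝ (fun y : EuclideanSpace ℝ (Fin n) => ‖y‖ ^ 2 - 1) x :=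
    ((contDiff_norm_sq ℝ).differentiable one_ne_zero x).sub_const 1
  have hsplit : (fun y => Vhat i j y * (‖y‖ ^ 2 * D y + (1 - ‖y‖ ^ 2) * G y))
      = fun y => Vhat i j y * D y + (‖y‖ ^ 2 - 1) * (Vhat i j y * (D y - G y)) := by
    funext y; ring
  rw [hsplit, pd_add i (hV.fun_mul hD) (hN.fun_mul (hV.fun_mul (hD.fun_sub hG))),
    pd_mul i hN (hV.fun_mul (hD.fun_sub hG)), pd_sub_const, pd_norm_sq, hx]
  ring

lemma sum_mul_sum_Vhat_mul_of_norm_eq_one {x : EuclideanSpace ℝ (Fin n)} (hx : ‖x‖ = 1)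
    (c : Fin n → ℝ) : ∑ i, x i * ∑ j, Vhat i j x * c j = 0 := by
  simp only [mul_sum, ← mul_assoc]
  rw [sum_comm]
  simp [← sum_mul, sum_mul_Vhat, hx]

end Lemmas

theorem stmt7_general {n : ℕ} (f : EuclideanSpace ℝ (Fin n) → ℝ)
    (hf : ContDiff ℝ 2 f) (x : EuclideanSpace ℝ (Fin n)) (hx : ‖x‖ = 1) :
    ∑ i, ∑ j, ∑ k, ∑ l,
        pd i (fun y => Vc i j k y * pd l (fun z => Vc l j k z * f z) y) x
      = ∑ i, ∑ j, ∑ l,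
        pd i (fun y => Vhat i j y * pd l (fun z => Vhat l j z * f z) y) x := by
  have hf' : Differentiable ℝ f := hf.differentiable two_ne_zero
  have hterm (i j : Fin n) :
      ∑ k, ∑ l, pd i (fun y => Vc i j k y * pd l (fun z => Vc l j k z * f z) y) x
        = ∑ l, pd i (fun y => Vhat i j y * pd l (fun z => Vhat l j z * f z) y) x
          + 2 * (x i * (Vhat i j x * (divVhatMul f j x - x j * f x))) := by
    rw [pd_sum_sum_Vc_mul_pd_Vc_mul hf, sum_pd_Vhat_mul_pd_Vhat_mul hf,
      pd_Vhat_mul_of_norm_eq_one hx (differentiable_divVhatMul hf j x) (by fun_prop)]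
  simp_rw [hterm, sum_add_distrib, ← mul_sum, sum_mul_sum_Vhat_mul_of_norm_eq_one hx, mul_zero,
    add_zero]

/-- **The diagonal part of the Fokker–Planck operator of the RQF coincides
with the Fokker–Planck operator of spherical Brownian motion.**
For every `C²` function `f : ℝⁿ → ℝ` and every unit vector `x`,
`Σ_{i,j,k,l} ∂_i(V^i_{jk} ∂_l(V^l_{jk} f))(x) = Σ_{i,j,l} ∂_i(V̂^i_j ∂_l(V̂^l_j f))(x)`. -/
theorem stmt7 {n : ℕ} (hn : 2 ≤ n) (f : EuclideanSpace ℝ (Fin n) → ℝ)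
    (hf : ContDiff ℝ 2 f) (x : EuclideanSpace ℝ (Fin n)) (hx : ‖x‖ = 1) :
    ∑ i, ∑ j, ∑ k, ∑ l,
        pd i (fun y => Vc i j k y * pd l (fun z => Vc l j k z * f z) y) x
      = ∑ i, ∑ j, ∑ l,
        pd i (fun y => Vhat i j y * pd l (fun z => Vhat l j z * f z) y) x :=
  stmt7_general f hf x hx
end

section
/- Let n ≥ 2, let σ be the uniform probability measure on the unit sphere S^{n-1} ⊂ ℝ^n, and let L be the generator of the Random Quadratic Form, (L u)(x) := ½ Σ_{j,k=1}^n G_{jk}(x)·∇( G_{jk}·∇u )(x) with G_{jk}(x) := ½ P_x (e_j x_k + e_k x_j). Then ∫_{S^{n-1}} (L u)(x) dσ(x) = 0 for every twice continuously differentiable u : ℝ^n → ℝ; i.e., the uniform measure on the sphere is an invariant measure of the Random Quadratic Form. -/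
open Matrix MeasureTheory

/-- The diffusion vector fields of the Random Quadratic Form:
`G_{jk}(x) = ½ P_x (x_k e_j + x_j e_k)` where `P_x = I - x xᵀ`. -/
noncomputable def rqfField {n : ℕ} (j k : Fin n) (x : EuclideanSpace ℝ (Fin n)) :
    EuclideanSpace ℝ (Fin n) :=
  (1 / 2 : ℝ) • toE (((1 : Matrix (Fin n) (Fin n) ℝ) - vecMulVec x x).mulVec
    (x k • (Pi.single j (1 : ℝ) : Fin n → ℝ) + x j • (Pi.single k (1 : ℝ) : Fin n → ℝ)))

/-- The directional derivative `F·∇u` of `u` along a vector field `F`. -/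
noncomputable def dirDeriv {n : ℕ}
    (F : EuclideanSpace ℝ (Fin n) → EuclideanSpace ℝ (Fin n))
    (u : EuclideanSpace ℝ (Fin n) → ℝ) (x : EuclideanSpace ℝ (Fin n)) : ℝ :=
  fderiv ℝ u x (F x)

/-- The generator of the Random Quadratic Form,
`(L u)(x) = ½ Σ_{j,k} G_{jk}(x)·∇(G_{jk}·∇u)(x)`. -/
noncomputable def rqfGen {n : ℕ} (u : EuclideanSpace ℝ (Fin n) → ℝ)
    (x : EuclideanSpace ℝ (Fin n)) : ℝ :=
  (1 / 2 : ℝ) * ∑ j, ∑ k, dirDeriv (rqfField j k) (dirDeriv (rqfField j k) u) x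

/-- The uniform probability measure on the unit sphere `S^{n-1} ⊆ ℝⁿ`:
the normalized restriction of the `(n-1)`-dimensional Hausdorff (surface)
measure to the sphere. -/
noncomputable def sphereUniform (n : ℕ) : Measure (EuclideanSpace ℝ (Fin n)) :=
  (μH[(n : ℝ) - 1] (Metric.sphere (0 : EuclideanSpace ℝ (Fin n)) 1))⁻¹ •
    (μH[(n : ℝ) - 1]).restrict (Metric.sphere (0 : EuclideanSpace ℝ (Fin n)) 1)

/-!
On the unit sphere the generator of the Random Quadratic Form equals `⅛ ∑ⱼₖ Rⱼₖ Rⱼₖ`, where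
`Rⱼₖ x = xⱼ eₖ - xₖ eⱼ` generates the rotations of the `(j, k)`-plane (so `L` is a quarter of the
Laplace–Beltrami operator). Writing `g = Du(x)` and `B = D²u(x)`, both operators split into a
first-order part, a multiple of `g x`, and a second-order part, a multiple of `tr B - B x x`, and
the constants agree once `‖x‖ = 1`.

Each `Rⱼₖ` is skew-symmetric, so `t ↦ exp (t Rⱼₖ)` is a group of linear isometries, which preserve
the surface measure. Hence `t ↦ ∫ v ∘ exp (t Rⱼₖ) dσ` is constant, and its derivative at `0`, by
differentiation under the integral sign, is `∫ Rⱼₖ v dσ = 0`. Apply this to `v = Rⱼₖ u`.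
-/

open NormedSpace Metric
open scoped InnerProductSpace

theorem integrable_of_ae_mem_isCompact {X : Type*} [TopologicalSpace X] [T2Space X]
    [MeasurableSpace X] [OpensMeasurableSpace X] {μ : Measure X} [IsFiniteMeasure μ]
    {K : Set X} (hK : IsCompact K) (hμK : ∀ᵐ x ∂μ, x ∈ K) {f : X → ℝ} (hf : Continuous f) :
    Integrable f μ := by
  rw [← Measure.restrict_eq_self_of_ae_mem hμK]
  exact hf.continuousOn.integrableOn_compact hK

section Flow

variable {E : Type*} [NormedAddCommGroup E] [NormedSpace ℝ E] [CompleteSpace E]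

theorem hasDerivAt_exp_smul_apply (A : E →L[ℝ] E) (x : E) (t : ℝ) :
    HasDerivAt (fun s : ℝ => exp (s • A) x) (A (exp (t • A) x)) t := by
  simpa using (hasDerivAt_exp_smul_const' A t).clm_apply (hasDerivAt_const t x)

theorem continuous_exp_smul_apply (A : E →L[ℝ] E) :
    Continuous fun p : ℝ × E => exp (p.1 • A) p.2 := by
  have : Continuous fun t : ℝ => exp (t • A) := continuous_iff_continuousAt.2 fun t =>
    (hasDerivAt_exp_smul_const' A t).continuousAt
  exact (this.comp continuous_fst).clm_apply continuous_snd

theorem integral_fderiv_apply_eq_zero_of_map_exp [MeasurableSpace E] [BorelSpace E]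
    {μ : Measure E} [IsFiniteMeasure μ] {K : Set E} (hK : IsCompact K)
    (hμK : ∀ᵐ x ∂μ, x ∈ K) {A : E →L[ℝ] E} (hμ : ∀ t : ℝ, μ.map ⇑(exp (t • A)) = μ)
    {v : E → ℝ} (hv : ContDiff ℝ 1 v) :
    ∫ x, fderiv ℝ v x (A x) ∂μ = 0 := by
  have hflow := continuous_exp_smul_apply A
  set ψ : ℝ × E → ℝ := fun p => fderiv ℝ v (exp (p.1 • A) p.2) (A (exp (p.1 • A) p.2))
  have hψ : Continuous ψ :=
    ((hv.continuous_fderiv one_ne_zero).comp hflow).clm_apply (A.continuous.comp hflow)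
  obtain ⟨C, hC⟩ := ((isCompact_closedBall (0 : ℝ) 1).prod hK).exists_bound_of_continuousOn
    hψ.continuousOn
  have hinv : ∀ t, ∫ x, v (exp (t • A) x) ∂μ = ∫ x, v x ∂μ := fun t => by
    conv_rhs => rw [← hμ t]
    exact (integral_map (hflow.comp (Continuous.prodMk_right t)).aemeasurable
      hv.continuous.aestronglyMeasurable).symm
  have hderiv := (hasDerivAt_integral_of_dominated_loc_of_deriv_le (x₀ := (0 : ℝ))
    (F := fun t x => v (exp (t • A) x)) (F' := fun t x => ψ (t, x))
    (closedBall_mem_nhds 0 one_pos)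
    (.of_forall fun t =>
      (hv.continuous.comp (hflow.comp (Continuous.prodMk_right t))).aestronglyMeasurable)
    (by simpa using integrable_of_ae_mem_isCompact hK hμK hv.continuous)
    (hψ.comp (Continuous.prodMk_right 0)).aestronglyMeasurable
    (hμK.mono fun x hx t ht => hC (t, x) ⟨ht, hx⟩) (integrable_const C)
    (.of_forall fun x t _ => ((hv.differentiable one_ne_zero) _).hasFDerivAt.comp_hasDerivAt t
      (hasDerivAt_exp_smul_apply A x t))).2
  simp only [hinv] at hderiv
  simpa [ψ] using hderiv.unique (hasDerivAt_const _ _)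

end Flow

theorem norm_exp_smul_apply_of_inner_self_eq_zero {E : Type*} [NormedAddCommGroup E]
    [InnerProductSpace ℝ E] [CompleteSpace E] {A : E →L[ℝ] E} (hA : ∀ x, ⟪A x, x⟫_ℝ = 0)
    (t : ℝ) (x : E) : ‖exp (t • A) x‖ = ‖x‖ := by
  have hconst := is_const_of_deriv_eq_zero
    (fun s => (hasDerivAt_exp_smul_apply A x s).norm_sq.differentiableAt)
    (fun s => by
      rw [(hasDerivAt_exp_smul_apply A x s).norm_sq.deriv, real_inner_comm, hA, mul_zero])
  simpa using hconst t 0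

section Isometry

variable {E : Type*} [NormedAddCommGroup E] [InnerProductSpace ℝ E] [FiniteDimensional ℝ E]
  {A : E →L[ℝ] E}

noncomputable def expSmulLinearIsometryEquiv (hA : ∀ x, ⟪A x, x⟫_ℝ = 0) (t : ℝ) :
    E ≃ₗᵢ[ℝ] E :=
  LinearIsometry.toLinearIsometryEquiv
    { toLinearMap := (exp (t • A) : E →L[ℝ] E)
      norm_map' := norm_exp_smul_apply_of_inner_self_eq_zero hA t } rfl

theorem integral_fderiv_apply_eq_zero_of_inner_self_eq_zero [MeasurableSpace E] [BorelSpace E]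
    {μ : Measure E} [IsFiniteMeasure μ] (hμ : ∀ L : E ≃ₗᵢ[ℝ] E, μ.map L = μ)
    {K : Set E} (hK : IsCompact K) (hμK : ∀ᵐ x ∂μ, x ∈ K)
    (hA : ∀ x, ⟪A x, x⟫_ℝ = 0) {v : E → ℝ} (hv : ContDiff ℝ 1 v) :
    ∫ x, fderiv ℝ v x (A x) ∂μ = 0 :=
  integral_fderiv_apply_eq_zero_of_map_exp hK hμK
    (fun t => hμ (expSmulLinearIsometryEquiv hA t)) hv

end Isometry

theorem map_hausdorffMeasure_restrict_sphere {E : Type*} [NormedAddCommGroup E]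
    [NormedSpace ℝ E] [MeasurableSpace E] [BorelSpace E] (L : E ≃ₗᵢ[ℝ] E) (d r : ℝ) :
    (μH[d].restrict (sphere (0 : E) r)).map L = μH[d].restrict (sphere (0 : E) r) := by
  ext s hs
  have hpre : L ⁻¹' sphere (0 : E) r = sphere 0 r := by ext x; simp
  rw [Measure.map_apply L.continuous.measurable hs, Measure.restrict_apply hs,
    Measure.restrict_apply (L.continuous.measurable hs), ← hpre, ← Set.preimage_inter, hpre]
  exact L.toIsometryEquiv.hausdorffMeasure_preimage d _


section Euclidean

variable {n : ℕ}

local notation "ℝⁿ" => EuclideanSpace ℝ (Fin n)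
local notation "𝐞" j:max => EuclideanSpace.single j (1 : ℝ)

theorem sum_mul_apply_single (g : ℝⁿ →L[ℝ] ℝ) (x : ℝⁿ) : ∑ k, x k * g (𝐞 k) = g x := by
  conv_rhs => rw [← (EuclideanSpace.basisFun (Fin n) ℝ).sum_repr x]
  simp [map_sum]

theorem sum_sq_eq_one_of_norm_eq_one {x : ℝⁿ} (hx : ‖x‖ = 1) : ∑ l, x l ^ 2 = 1 := by
  simpa [hx, sq_abs] using (EuclideanSpace.norm_sq_eq x).symm

noncomputable def rotField (j k : Fin n) : ℝⁿ →L[ℝ] ℝⁿ :=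
  (EuclideanSpace.proj j).smulRight (𝐞 k) - (EuclideanSpace.proj k).smulRight (𝐞 j)

theorem rotField_apply (j k : Fin n) (x : ℝⁿ) : rotField j k x = x j • 𝐞 k - x k • 𝐞 j := by
  simp [rotField]

theorem inner_rotField_self (j k : Fin n) (x : ℝⁿ) : ⟪rotField j k x, x⟫_ℝ = 0 := by
  simp [rotField_apply, inner_sub_left, inner_smul_left, EuclideanSpace.inner_single_left]
  ring

theorem rqfField_eq (j k : Fin n) (x : ℝⁿ) :
    rqfField j k x = (x k / 2) • 𝐞 j + (x j / 2) • 𝐞 k - (x j * x k) • x := by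
  ext m
  simp only [rqfField, toE, Matrix.sub_mulVec, Matrix.one_mulVec]
  simp only [PiLp.smul_apply, PiLp.add_apply, PiLp.sub_apply, smul_eq_mul,
    Pi.add_apply, Pi.smul_apply, Pi.sub_apply, Matrix.mulVec, Matrix.vecMulVec_apply,
    dotProduct, PiLp.single_apply, Pi.single_apply,
    mul_add, mul_ite, mul_one, mul_zero, Finset.sum_add_distrib,
    Finset.sum_ite_eq', Finset.mem_univ, if_true]
  split_ifs <;> ring

theorem rqfField_eq_fun (j k : Fin n) :
    rqfField j k = fun y : ℝⁿ => (y k * 2⁻¹) • 𝐞 j + (y j * 2⁻¹) • 𝐞 k - (y j * y k) • y :=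
  funext fun y => by simp only [rqfField_eq, div_eq_mul_inv]

theorem differentiable_rqfField (j k : Fin n) : Differentiable ℝ (rqfField j k) := by
  rw [rqfField_eq_fun]
  fun_prop

theorem fderiv_rqfField_apply (j k : Fin n) (x w : ℝⁿ) :
    fderiv ℝ (rqfField j k) x w =
      (w k / 2) • 𝐞 j + (w j / 2) • 𝐞 k - (w j * x k + w k * x j) • x - (x j * x k) • w := by
  have hproj (i : Fin n) : HasFDerivAt (fun y : ℝⁿ => y i) (EuclideanSpace.proj (𝕜 := ℝ) i) x :=
    (EuclideanSpace.proj (𝕜 := ℝ) i).hasFDerivAt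
  have hd : HasFDerivAt (fun y : ℝⁿ => (y k * 2⁻¹) • 𝐞 j + (y j * 2⁻¹) • 𝐞 k - (y j * y k) • y)
      _ x :=
    ((((hproj k).mul_const 2⁻¹).smul_const _).add (((hproj j).mul_const 2⁻¹).smul_const _)).sub
      (((hproj j).mul (hproj k)).smul (hasFDerivAt_id x))
  rw [rqfField_eq_fun, hd.fderiv]
  simp
  module

theorem sum_mul_apply_single_apply (B : ℝⁿ →L[ℝ] ℝⁿ →L[ℝ] ℝ) (x b : ℝⁿ) :
    ∑ k, x k * B (𝐞 k) b = B x b :=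
  sum_mul_apply_single (B.flip b) x

-- Each `step` below puts the factor depending on `k` on the left, so that `← Finset.sum_mul`
-- exposes the contractions `∑ₖ xₖ g eₖ = g x`, `∑ₖ xₖ B eₖ b = B x b` and `∑ₖ xₖ² = 1`.
theorem sum_sum_apply_rotField_rotField (g : ℝⁿ →L[ℝ] ℝ) (x : ℝⁿ) :
    ∑ j, ∑ k, g (rotField j k (rotField j k x)) = (2 - 2 * n) * g x := by
  have inner (j : Fin n) : ∑ k, g (rotField j k (rotField j k x))
      = -g x + (x j * g (𝐞 j)) * (2 - n) := by
    have step (k : Fin n) : g (rotField j k (rotField j k x))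
        = -(x k * g (𝐞 k)) - (x j * g (𝐞 j))
          + (if k = j then 2 * (x j * g (𝐞 j)) else 0) := by
      simp only [rotField_apply, smul_eq_mul, PiLp.single_apply, map_sub, map_smul]
      by_cases h : k = j
      · subst h; simp; ring
      · simp [h, Ne.symm h]; ring
    simp only [step, Finset.sum_add_distrib, Finset.sum_sub_distrib, Finset.sum_neg_distrib,
      Finset.sum_ite_eq', Finset.mem_univ, if_true, Finset.sum_const, Finset.card_univ,
      Fintype.card_fin, nsmul_eq_mul, sum_mul_apply_single]
    ring
  simp only [inner, Finset.sum_add_distrib, ← Finset.sum_mul, Finset.sum_neg_distrib,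
    Finset.sum_const, Finset.card_univ, Fintype.card_fin, nsmul_eq_mul, sum_mul_apply_single]
  ring

theorem sum_sum_rotField_rotField (B : ℝⁿ →L[ℝ] ℝⁿ →L[ℝ] ℝ) {x : ℝⁿ} (hx : ∑ l, x l ^ 2 = 1) :
    ∑ j, ∑ k, B (rotField j k x) (rotField j k x) = 2 * ∑ j, B (𝐞 j) (𝐞 j) - 2 * B x x := by
  have inner (j : Fin n) : ∑ k, B (rotField j k x) (rotField j k x)
      = x j ^ 2 * ∑ k, B (𝐞 k) (𝐞 k) - x j * B x (𝐞 j) - x j * B (𝐞 j) x + B (𝐞 j) (𝐞 j) := by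
    have step (k : Fin n) : B (rotField j k x) (rotField j k x)
        = x j ^ 2 * B (𝐞 k) (𝐞 k) - (x k * B (𝐞 k) (𝐞 j)) * x j
          - (x k * B (𝐞 j) (𝐞 k)) * x j + x k ^ 2 * B (𝐞 j) (𝐞 j) := by
      simp only [rotField_apply, map_sub, map_smul, _root_.sub_apply, _root_.smul_apply,
        smul_eq_mul]
      ring
    simp only [step, Finset.sum_add_distrib, Finset.sum_sub_distrib, ← Finset.mul_sum,
      ← Finset.sum_mul, sum_mul_apply_single_apply, sum_mul_apply_single, hx]
    ring
  simp only [inner, Finset.sum_add_distrib, Finset.sum_sub_distrib, ← Finset.sum_mul,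
    sum_mul_apply_single_apply, sum_mul_apply_single, hx]
  ring

theorem sum_sum_rqfField_rqfField (B : ℝⁿ →L[ℝ] ℝⁿ →L[ℝ] ℝ) {x : ℝⁿ} (hx : ∑ l, x l ^ 2 = 1) :
    ∑ j, ∑ k, B (rqfField j k x) (rqfField j k x) = (∑ j, B (𝐞 j) (𝐞 j)) / 2 - B x x / 2 := by
  have inner (j : Fin n) : ∑ k, B (rqfField j k x) (rqfField j k x)
      = B (𝐞 j) (𝐞 j) * (1 / 4) - (x j * B (𝐞 j) x) * (1 / 4) - (x j * B x (𝐞 j)) * (1 / 4)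
        + x j ^ 2 * ((∑ k, B (𝐞 k) (𝐞 k)) / 4) := by
    have step (k : Fin n) : B (rqfField j k x) (rqfField j k x)
        = x k ^ 2 * (B (𝐞 j) (𝐞 j) * (1 / 4))
          + (x k * B (𝐞 j) (𝐞 k)) * (x j * (1 / 4))
          + (x k * B (𝐞 k) (𝐞 j)) * (x j * (1 / 4))
          + x k ^ 2 * (-(x j / 2) * B (𝐞 j) x)
          + B (𝐞 k) (𝐞 k) * (x j ^ 2 * (1 / 4))
          + (x k * B (𝐞 k) x) * (-x j ^ 2 / 2)
          + x k ^ 2 * (-(x j / 2) * B x (𝐞 j))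
          + (x k * B x (𝐞 k)) * (-x j ^ 2 / 2)
          + x k ^ 2 * (x j ^ 2 * B x x) := by
      simp only [rqfField_eq, map_add, map_sub, map_smul, _root_.add_apply, _root_.sub_apply,
        _root_.smul_apply, smul_eq_mul]
      ring
    simp only [step, Finset.sum_add_distrib, ← Finset.sum_mul, sum_mul_apply_single,
      sum_mul_apply_single_apply, hx]
    ring
  simp only [inner, Finset.sum_add_distrib, Finset.sum_sub_distrib, ← Finset.sum_mul,
    sum_mul_apply_single_apply, sum_mul_apply_single, hx]
  ring

theorem sum_sum_apply_fderiv_rqfField_rqfField (g : ℝⁿ →L[ℝ] ℝ) {x : ℝⁿ}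
    (hx : ∑ l, x l ^ 2 = 1) :
    ∑ j, ∑ k, g (fderiv ℝ (rqfField j k) x (rqfField j k x)) = -((n - 1) / 2) * g x := by
  have inner (j : Fin n) : ∑ k, g (fderiv ℝ (rqfField j k) x (rqfField j k x))
      = (x j * g (𝐞 j)) * (n / 4 - 1 / 2) + x j ^ 2 * (g x * (1 - n / 2)) + g x * (-1 / 4) := by
    have step (k : Fin n) : g (fderiv ℝ (rqfField j k) x (rqfField j k x))
        = (x j * g (𝐞 j)) * (1 / 4) - x k ^ 2 * (x j * g (𝐞 j)) + (x k * g (𝐞 k)) * (1 / 4)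
          - (x k * g (𝐞 k)) * x j ^ 2 - x k ^ 2 * (g x * (1 / 2)) - x j ^ 2 * g x * (1 / 2)
          + x k ^ 2 * (3 * x j ^ 2 * g x)
          + (if k = j then (x j * g (𝐞 j)) * (1 / 2) - x j ^ 2 * g x else 0) := by
      rw [fderiv_rqfField_apply]
      simp only [map_add, map_sub, map_smul, smul_eq_mul, rqfField_eq, PiLp.add_apply,
        PiLp.sub_apply, PiLp.smul_apply, PiLp.single_apply]
      by_cases h : k = j
      · subst h; simp; ring
      · simp [h, Ne.symm h]; ring
    simp only [step, Finset.sum_add_distrib, Finset.sum_sub_distrib, ← Finset.sum_mul,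
      Finset.sum_ite_eq', Finset.mem_univ, if_true, Finset.sum_const, Finset.card_univ,
      Fintype.card_fin, nsmul_eq_mul, sum_mul_apply_single, hx]
    ring
  simp only [inner, Finset.sum_add_distrib, ← Finset.sum_mul, Finset.sum_const, Finset.card_univ,
    Fintype.card_fin, nsmul_eq_mul, sum_mul_apply_single, hx]
  ring

theorem dirDeriv_dirDeriv {u : ℝⁿ → ℝ} (hu : ContDiff ℝ 2 u) {F : ℝⁿ → ℝⁿ} {x : ℝⁿ}
    (hF : DifferentiableAt ℝ F x) :
    dirDeriv F (dirDeriv F u) x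
      = fderiv ℝ u x (fderiv ℝ F x (F x)) + fderiv ℝ (fderiv ℝ u) x (F x) (F x) := by
  have hu' : DifferentiableAt ℝ (fderiv ℝ u) x :=
    (hu.fderiv_right (m := 1) (by norm_num)).differentiable one_ne_zero x
  rw [dirDeriv, show dirDeriv F u = fun y => fderiv ℝ u y (F y) from rfl,
    fderiv_clm_apply hu' hF]
  simp

theorem rqfGen_eq_sum_sum_rotField {u : ℝⁿ → ℝ} (hu : ContDiff ℝ 2 u) {x : ℝⁿ} (hx : ‖x‖ = 1) :
    rqfGen u x = (1 / 8) * ∑ j, ∑ k, dirDeriv (rotField j k) (dirDeriv (rotField j k) u) x := by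
  have hx' := sum_sq_eq_one_of_norm_eq_one hx
  simp only [rqfGen, dirDeriv_dirDeriv hu (differentiable_rqfField _ _ x),
    dirDeriv_dirDeriv hu (rotField _ _).differentiableAt, ContinuousLinearMap.fderiv,
    Finset.sum_add_distrib, sum_sum_apply_fderiv_rqfField_rqfField _ hx',
    sum_sum_rqfField_rqfField _ hx', sum_sum_apply_rotField_rotField,
    sum_sum_rotField_rotField _ hx']
  ring

theorem contDiff_dirDeriv_rotField (j k : Fin n) {u : ℝⁿ → ℝ} (hu : ContDiff ℝ 2 u) :
    ContDiff ℝ 1 (dirDeriv (rotField j k) u) :=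
  (hu.fderiv_right (m := 1) (by norm_num)).clm_apply (rotField j k).contDiff

theorem continuous_dirDeriv_rotField (j k : Fin n) {v : ℝⁿ → ℝ} (hv : ContDiff ℝ 1 v) :
    Continuous (dirDeriv (rotField j k) v) :=
  (hv.continuous_fderiv one_ne_zero).clm_apply (rotField j k).continuous

instance : IsFiniteMeasure (sphereUniform n) where
  measure_univ_lt_top := by
    simpa [sphereUniform] using (ENNReal.inv_mul_le_one _).trans_lt ENNReal.one_lt_top

theorem map_sphereUniform (L : ℝⁿ ≃ₗᵢ[ℝ] ℝⁿ) : (sphereUniform n).map L = sphereUniform n := by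
  rw [sphereUniform, Measure.map_smul, map_hausdorffMeasure_restrict_sphere]

theorem ae_mem_sphere_sphereUniform : ∀ᵐ x ∂(sphereUniform n), x ∈ sphere (0 : ℝⁿ) 1 :=
  Measure.ae_smul_measure (ae_restrict_mem isClosed_sphere.measurableSet) _

theorem integral_dirDeriv_rotField_sphereUniform (j k : Fin n) {v : ℝⁿ → ℝ}
    (hv : ContDiff ℝ 1 v) :
    ∫ x, dirDeriv (rotField j k) v x ∂(sphereUniform n) = 0 :=
  integral_fderiv_apply_eq_zero_of_inner_self_eq_zero map_sphereUniform (isCompact_sphere 0 1)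
    ae_mem_sphere_sphereUniform (inner_rotField_self j k) hv

end Euclidean

theorem stmt10_general {n : ℕ} (u : EuclideanSpace ℝ (Fin n) → ℝ)
    (hu : ContDiff ℝ 2 u) :
    ∫ x, rqfGen u x ∂(sphereUniform n) = 0 := by
  have hRu (j k : Fin n) := contDiff_dirDeriv_rotField j k hu
  have hint (j k : Fin n) : Integrable (dirDeriv (rotField j k) (dirDeriv (rotField j k) u))
      (sphereUniform n) :=
    integrable_of_ae_mem_isCompact (isCompact_sphere 0 1) ae_mem_sphere_sphereUniform
      (continuous_dirDeriv_rotField j k (hRu j k))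
  calc ∫ x, rqfGen u x ∂(sphereUniform n)
      = ∫ x, (1 / 8) * ∑ j, ∑ k, dirDeriv (rotField j k) (dirDeriv (rotField j k) u) x
          ∂(sphereUniform n) :=
        integral_congr_ae <| ae_mem_sphere_sphereUniform.mono fun x hx =>
          rqfGen_eq_sum_sum_rotField hu (mem_sphere_zero_iff_norm.1 hx)
    _ = (1 / 8) * ∑ j, ∑ k, ∫ x, dirDeriv (rotField j k) (dirDeriv (rotField j k) u) x
          ∂(sphereUniform n) := by
        rw [integral_const_mul, integral_finsetSum _ fun j _ => integrable_finsetSum _ fun k _ =>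
          hint j k]
        simp only [integral_finsetSum _ fun k _ => hint _ k]
    _ = 0 := by simp [integral_dirDeriv_rotField_sphereUniform _ _ (hRu _ _)]

/-- **The uniform measure on the sphere is invariant for the Random Quadratic
Form.**  For every `C²` function `u : ℝⁿ → ℝ`,
`∫_{S^{n-1}} (L u) dσ = 0`, where `L` is the generator of the RQF and `σ` the
uniform probability measure on the unit sphere. -/
theorem stmt10 {n : ℕ} (hn : 2 ≤ n) (u : EuclideanSpace ℝ (Fin n) → ℝ)
    (hu : ContDiff ℝ 2 u) :
    ∫ x, rqfGen u x ∂(sphereUniform n) = 0 :=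
  stmt10_general u hu
end

section
/- Let x, y ∈ ℝ^n with ‖x‖ = ‖y‖ = 1 and set z := ⟨x, y⟩. Then ½ Σ_{i,j=1}^n ( −z (x_i x_j + y_i y_j) + (x_i y_j + y_i x_j) )² = (1 − z²)². In other words, the diffusion coefficient Σ(z) of the scalar-product process Z_t = ⟨X_t, Y_t⟩ of two Random Quadratic Forms driven by the same noise equals (1 − z²)², depending only on z and not on the individual positions x, y. -/
/-!
The matrix entry factors as `(y - z x)ᵢ xⱼ + (x - z y)ᵢ yⱼ`, so the double sum is a squared
Frobenius norm of a rank-two matrix, computable from inner products alone. For unit `x, y`,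
`‖y - z x‖² = ‖x - z y‖² = 1 - z²` and `⟪y - z x, x - z y⟫ = z³ - z`, which gives
`2 (1 - z²) + 2 z (z³ - z) = 2 (1 - z²)²`.
-/

open RealInnerProductSpace

theorem EuclideanSpace.sum_sum_sq_mul_add_mul {ι : Type*} [Fintype ι]
    (u v x y : EuclideanSpace ℝ ι) :
    ∑ i, ∑ j, (u i * x j + v i * y j) ^ 2
      = ‖u‖ ^ 2 * ‖x‖ ^ 2 + 2 * ⟪u, v⟫ * ⟪x, y⟫ + ‖v‖ ^ 2 * ‖y‖ ^ 2 := by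
  calc ∑ i, ∑ j, (u i * x j + v i * y j) ^ 2
      = ∑ i, ∑ j, (u i ^ 2 * x j ^ 2 + 2 * (v i * u i * (y j * x j)) + v i ^ 2 * y j ^ 2) := by
        congr! 2 with i _ j _
        ring
    _ = (∑ i, u i ^ 2) * (∑ j, x j ^ 2) + 2 * ((∑ i, v i * u i) * (∑ j, y j * x j))
          + (∑ i, v i ^ 2) * (∑ j, y j ^ 2) := by
        simp only [Finset.sum_mul_sum, Finset.sum_add_distrib]
        simp only [Finset.mul_sum]
    _ = ‖u‖ ^ 2 * ‖x‖ ^ 2 + 2 * ⟪u, v⟫ * ⟪x, y⟫ + ‖v‖ ^ 2 * ‖y‖ ^ 2 := by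
        simp only [EuclideanSpace.norm_sq_eq, EuclideanSpace.inner_eq_star_dotProduct, dotProduct,
          Real.norm_eq_abs, sq_abs, star_trivial]
        ring

section UnitVector

variable {E : Type*} [NormedAddCommGroup E] [InnerProductSpace ℝ E]

theorem norm_sub_inner_smul_sq {x : E} (hx : ‖x‖ = 1) (y : E) :
    ‖y - ⟪x, y⟫ • x‖ ^ 2 = ‖y‖ ^ 2 - ⟪x, y⟫ ^ 2 := by
  rw [norm_sub_sq_real, inner_smul_right, norm_smul, hx, Real.norm_eq_abs, mul_one, sq_abs,
    real_inner_comm y x]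
  ring

theorem inner_sub_inner_smul_sub_inner_smul {x y : E} (hx : ‖x‖ = 1) (hy : ‖y‖ = 1) :
    ⟪y - ⟪x, y⟫ • x, x - ⟪x, y⟫ • y⟫ = ⟪x, y⟫ ^ 3 - ⟪x, y⟫ := by
  simp only [inner_sub_left, inner_sub_right, inner_smul_left, inner_smul_right,
    real_inner_self_eq_norm_sq, hx, hy, real_inner_comm x y, conj_trivial]
  ring

end UnitVector

theorem stmt14_general {n : ℕ} (x y : EuclideanSpace ℝ (Fin n))
    (hx : ‖x‖ = 1) (hy : ‖y‖ = 1) (z : ℝ) (hz : z = ⟪x, y⟫) :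
    (1 / 2 : ℝ) * ∑ i, ∑ j,
        (-z * (x i * x j + y i * y j) + (x i * y j + y i * x j)) ^ 2
      = (1 - z ^ 2) ^ 2 := by
  have hentry : ∀ i j, -z * (x i * x j + y i * y j) + (x i * y j + y i * x j)
      = (y - z • x) i * x j + (x - z • y) i * y j := by
    intro i j
    simp only [PiLp.sub_apply, PiLp.smul_apply, smul_eq_mul]
    ring
  have hu : ‖y - z • x‖ ^ 2 = 1 - z ^ 2 := by
    rw [hz, norm_sub_inner_smul_sq hx, hy, one_pow]
  have hv : ‖x - z • y‖ ^ 2 = 1 - z ^ 2 := by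
    rw [hz, real_inner_comm, norm_sub_inner_smul_sq hy, hx, one_pow]
  have huv : ⟪y - z • x, x - z • y⟫ = z ^ 3 - z := by
    rw [hz, inner_sub_inner_smul_sub_inner_smul hx hy]
  simp only [hentry, EuclideanSpace.sum_sum_sq_mul_add_mul, hx, hy, hu, hv, huv, ← hz]
  ring

/-- **Diffusion coefficient of the scalar-product process.**
For unit vectors `x, y ∈ ℝⁿ` with `z = ⟪x, y⟫`,
`½ Σ_{i,j} (-z (xᵢxⱼ + yᵢyⱼ) + (xᵢyⱼ + yᵢxⱼ))² = (1 - z²)²`. -/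
theorem stmt14 {n : ℕ} (hn : 2 ≤ n) (x y : EuclideanSpace ℝ (Fin n))
    (hx : ‖x‖ = 1) (hy : ‖y‖ = 1) (z : ℝ) (hz : z = ⟪x, y⟫) :
    (1 / 2 : ℝ) * ∑ i, ∑ j,
        (-z * (x i * x j + y i * y j) + (x i * y j + y i * x j)) ^ 2
      = (1 - z ^ 2) ^ 2 :=
  stmt14_general x y hx hy z hz
end

section
/- Fix c ∈ (−1, 1). Then: (i) for every y ∈ (−1, 1), ∫_c^y 2x/(1 − x²) dx = log(1 − c²) − log(1 − y²), so that exp( −∫_c^y 2x/(1 − x²) dx ) = (1 − y²)/(1 − c²); and (ii) for every z ∈ (−1, 1), the scale function s(z) := ∫_c^z exp( −∫_c^y 2x/(1 − x²) dx ) dy equals ( (z − z³/3) − (c − c³/3) ) / (1 − c²). In particular s extends continuously to [−1, 1], so s(−1) > −∞ and s(1) < +∞, i.e. both boundary points ±1 of the diffusion dẐ = 2Ẑ(1 − Ẑ²) dt + √2 (1 − Ẑ²) ∂B on [−1,1] are attracting. -/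
/-! Since `-log (1 - x²)` is an antiderivative of `2x/(1 - x²)` on `(-1, 1)`, the integrand of the
scale function is the polynomial `(1 - y²)/(1 - c²)`, whose antiderivative `y - y³/3` is bounded on
`[-1, 1]`. -/

open Real Set intervalIntegral

lemma one_sub_sq_pos_of_mem_Ioo {x : ℝ} (hx : x ∈ Ioo (-1 : ℝ) 1) : 0 < 1 - x ^ 2 := by
  nlinarith [hx.1, hx.2]

lemma hasDerivAt_neg_log_one_sub_sq {x : ℝ} (hx : 1 - x ^ 2 ≠ 0) :
    HasDerivAt (fun t => -log (1 - t ^ 2)) (2 * x / (1 - x ^ 2)) x := by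
  have h : HasDerivAt (fun t : ℝ => 1 - t ^ 2) (-(2 * x)) x := by
    simpa using (hasDerivAt_pow 2 x).const_sub 1
  exact (h.log hx).neg.congr_deriv (by ring)

lemma integral_two_mul_div_one_sub_sq {a b : ℝ} (h : ∀ x ∈ uIcc a b, 1 - x ^ 2 ≠ 0) :
    ∫ x in a..b, 2 * x / (1 - x ^ 2) = log (1 - a ^ 2) - log (1 - b ^ 2) := by
  have hint : IntervalIntegrable (fun x => 2 * x / (1 - x ^ 2)) MeasureTheory.volume a b :=
    (ContinuousOn.div (by fun_prop) (by fun_prop) h).intervalIntegrable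
  rw [integral_eq_sub_of_hasDerivAt (fun x hx => hasDerivAt_neg_log_one_sub_sq (h x hx)) hint]
  ring

lemma integral_two_mul_div_one_sub_sq_of_mem_Ioo {a b : ℝ} (ha : a ∈ Ioo (-1 : ℝ) 1)
    (hb : b ∈ Ioo (-1 : ℝ) 1) :
    ∫ x in a..b, 2 * x / (1 - x ^ 2) = log (1 - a ^ 2) - log (1 - b ^ 2) :=
  integral_two_mul_div_one_sub_sq fun _ hx =>
    (one_sub_sq_pos_of_mem_Ioo (ordConnected_Ioo.uIcc_subset ha hb hx)).ne'

lemma exp_neg_integral_two_mul_div_one_sub_sq {a b : ℝ} (ha : a ∈ Ioo (-1 : ℝ) 1)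
    (hb : b ∈ Ioo (-1 : ℝ) 1) :
    exp (-∫ x in a..b, 2 * x / (1 - x ^ 2)) = (1 - b ^ 2) / (1 - a ^ 2) := by
  rw [integral_two_mul_div_one_sub_sq_of_mem_Ioo ha hb, neg_sub, exp_sub,
    exp_log (one_sub_sq_pos_of_mem_Ioo hb), exp_log (one_sub_sq_pos_of_mem_Ioo ha)]

lemma integral_one_sub_sq_div (a b k : ℝ) :
    ∫ x in a..b, (1 - x ^ 2) / k = ((b - b ^ 3 / 3) - (a - a ^ 3 / 3)) / k := by
  rw [intervalIntegral.integral_div, integral_sub intervalIntegrable_const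
    (intervalIntegrable_pow 2), integral_const, integral_pow]
  simp only [smul_eq_mul]
  ring

/-- **The scale function of the scalar-product diffusion.**
Fix `c ∈ (-1,1)`.  Then (i) for `y ∈ (-1,1)`,
`∫_c^y 2x/(1-x²) dx = log(1-c²) - log(1-y²)`, hence
`exp(-∫_c^y 2x/(1-x²) dx) = (1-y²)/(1-c²)`; and (ii) for `z ∈ (-1,1)` the
scale function `s(z) = ∫_c^z exp(-∫_c^y 2x/(1-x²) dx) dy` equals
`((z - z³/3) - (c - c³/3))/(1-c²)`.  In particular this formula extends
continuously to `[-1,1]`, so `s(-1) > -∞` and `s(1) < +∞`: both boundary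
points of the diffusion `dẐ = 2Ẑ(1-Ẑ²)dt + √2(1-Ẑ²)∂B` are attracting. -/
theorem stmt16 (c : ℝ) (hc : c ∈ Set.Ioo (-1 : ℝ) 1) :
    (∀ y ∈ Set.Ioo (-1 : ℝ) 1,
      (∫ x in c..y, 2 * x / (1 - x ^ 2)) =
          Real.log (1 - c ^ 2) - Real.log (1 - y ^ 2) ∧
      Real.exp (-(∫ x in c..y, 2 * x / (1 - x ^ 2))) =
          (1 - y ^ 2) / (1 - c ^ 2)) ∧
    (∀ z ∈ Set.Ioo (-1 : ℝ) 1,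
      (∫ y in c..z, Real.exp (-(∫ x in c..y, 2 * x / (1 - x ^ 2)))) =
          ((z - z ^ 3 / 3) - (c - c ^ 3 / 3)) / (1 - c ^ 2)) ∧
    ContinuousOn (fun z : ℝ => ((z - z ^ 3 / 3) - (c - c ^ 3 / 3)) / (1 - c ^ 2))
      (Set.Icc (-1 : ℝ) 1) := by
  refine ⟨fun y hy => ⟨integral_two_mul_div_one_sub_sq_of_mem_Ioo hc hy,
    exp_neg_integral_two_mul_div_one_sub_sq hc hy⟩, fun z hz => ?_, by fun_prop⟩
  rw [← integral_one_sub_sq_div]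
  exact integral_congr fun y hy =>
    exp_neg_integral_two_mul_div_one_sub_sq hc (ordConnected_Ioo.uIcc_subset hc hz hy)
end
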